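/- Let A be a positive semidefinite bounded operator on a Hilbert space H and T ∈ B_{A^{1/2}}(H). Then σ_{(A⊗A),app}(T⊗I) = σ_{A,app}(T), and likewise σ_{(A⊗A),app}(I⊗T) = σ_{A,app}(T). -/

import Mathlib

/-!
Write `√A` for the positive square root of `A`, so that `‖x‖_A = ‖√A x‖`. For a finite sum
`z = ∑ xᵢ ⊗ yᵢ` one has `‖z‖_{A⊗A} = ‖∑ √A xᵢ ⊗ √A yᵢ‖`, and expanding the `√A yᵢ` in an
orthonormal basis `eⱼ` of their span rewrites this as `‖∑ √A uⱼ ⊗ eⱼ‖ = (∑ ‖uⱼ‖_A ^ 2) ^ (1/2)`.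
Hence a lower bound `c ‖x‖_A ≤ ‖(T - λ) x‖_A` passes to `T ⊗ I - λ` on finite sums, and by
density to the whole tensor product: if `λ ∉ σ_{A,app}(T)` then `λ ∉ σ_{A⊗A,app}(T ⊗ I)`.
Conversely, if `xₙ` are `A`-unit approximate eigenvectors of `T`, then so are the `xₙ ⊗ x₀` for
`T ⊗ I`. The case of `I ⊗ T` is the same with the two factors swapped.
-/

open Filter Topology ContinuousLinearMap

variable {H : Type*} [NormedAddCommGroup H] [InnerProductSpace ℂ H] [CompleteSpace H]

/-- The `A`-seminorm `‖x‖_A = ⟨Ax,x⟩^{1/2}`. -/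
noncomputable def anorm (A : H →L[ℂ] H) (x : H) : ℝ :=
  Real.sqrt (inner ℂ (A x) x : ℂ).re

/-- `B_{A^{1/2}}(H)`: the `A`-bounded operators. -/
def MemBAhalf (A T : H →L[ℂ] H) : Prop :=
  ∃ d > 0, ∀ ξ : H, anorm A (T ξ) ≤ d * anorm A ξ

/-- `B_A(H)`: operators admitting an `A`-adjoint. -/
def MemBA (A T : H →L[ℂ] H) : Prop :=
  Set.range (fun x => ContinuousLinearMap.adjoint T (A x)) ⊆ Set.range A

/-- A-invertibility in `B_{A^{1/2}}(H)`. -/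
def AInvertibleHalf (A T : H →L[ℂ] H) : Prop :=
  ∃ S : H →L[ℂ] H, S ≠ 0 ∧ MemBAhalf A S ∧ A ∘L T ∘L S = A ∧ A ∘L S ∘L T = A

/-- A-invertibility in `B_A(H)`. -/
def AInvertibleBA (A T : H →L[ℂ] H) : Prop :=
  ∃ S : H →L[ℂ] H, S ≠ 0 ∧ MemBA A S ∧ A ∘L T ∘L S = A ∧ A ∘L S ∘L T = A

/-- The `A`-approximate point spectrum. -/
def sigmaAapp (A T : H →L[ℂ] H) : Set ℂ :=
  {lam | ∃ x : ℕ → H, (∀ n, anorm A (x n) = 1) ∧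
    Tendsto (fun n => anorm A (T (x n) - lam • x n)) atTop (nhds 0)}

/-- The `A`-spectrum. -/
def sigmaA (A T : H →L[ℂ] H) : Set ℂ :=
  {lam | ¬ AInvertibleHalf A (lam • (1 : H →L[ℂ] H) - T)}

/-- The `A`-numerical range. -/
def WA (A T : H →L[ℂ] H) : Set ℂ :=
  {z | ∃ x : H, anorm A x = 1 ∧ z = (inner ℂ (A (T x)) x : ℂ)}

/-- The `A`-operator seminorm, sup over the closure of the range of `A`. -/
noncomputable def AopnormCl (A T : H →L[ℂ] H) : ℝ :=
  sSup {r | ∃ ξ ∈ closure (Set.range A), anorm A ξ ≤ 1 ∧ r = anorm A (T ξ)}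

/-- The `A`-operator seminorm, sup over all vectors of `A`-seminorm at most one. -/
noncomputable def Aopnorm (A T : H →L[ℂ] H) : ℝ :=
  sSup {r | ∃ ξ : H, anorm A ξ ≤ 1 ∧ r = anorm A (T ξ)}

/-- The `A`-numerical radius. -/
noncomputable def wA (A T : H →L[ℂ] H) : ℝ :=
  sSup {r | ∃ x : H, anorm A x = 1 ∧ r = ‖(inner ℂ (A (T x)) x : ℂ)‖}

/-- The `A`-reduced minimum modulus. -/
noncomputable def gammaA (A T : H →L[ℂ] H) : ℝ :=
  sInf {r | ∃ ξ : H, (∀ y : H, anorm A (T y) = 0 → (inner ℂ (A ξ) y : ℂ) = 0) ∧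
    anorm A ξ = 1 ∧ r = anorm A (T ξ)}

/-- closure of the range of `A` as a submodule. -/
noncomputable def rangeClosure (A : H →L[ℂ] H) : Submodule ℂ H :=
  (LinearMap.range (A : H →ₗ[ℂ] H)).topologicalClosure

noncomputable instance (A : H →L[ℂ] H) : CompleteSpace (rangeClosure A) :=
  (Submodule.isClosed_topologicalClosure _).completeSpace_coe

/-- orthogonal projection onto the closure of the range of `A`, as an operator on `H`. -/
noncomputable def Pcl (A : H →L[ℂ] H) : H →L[ℂ] H :=
  (rangeClosure A).subtypeL ∘L Submodule.orthogonalProjection (rangeClosure A)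

section BilinearSums

variable {R M N P : Type*} [CommSemiring R] [AddCommMonoid M] [AddCommMonoid N] [AddCommMonoid P]
  [Module R M] [Module R N] [Module R P] {tmul : M →ₗ[R] N →ₗ[R] P}

theorem sum_tmul_sum_smul {ι ι' : Type*} [Fintype ι] [Fintype ι']
    (a : ι → M) (c : ι → ι' → R) (e : ι' → N) :
    ∑ i, tmul (a i) (∑ j, c i j • e j) = ∑ j, tmul (∑ i, c i j • a i) (e j) := by
  simp only [map_sum, map_smul, LinearMap.sum_apply, LinearMap.smul_apply]
  exact Finset.sum_comm

theorem exists_eq_sum_tmul_of_mem_span {z : P}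
    (hz : z ∈ Submodule.span R {z | ∃ x y, z = tmul x y}) :
    ∃ (n : ℕ) (x : Fin n → M) (y : Fin n → N), z = ∑ i, tmul (x i) (y i) := by
  obtain ⟨n, a, g, rfl⟩ := Submodule.mem_span_set'.mp hz
  choose x y hxy using fun i => (g i).2
  exact ⟨n, fun i => a i • x i, y, by simp [hxy]⟩

end BilinearSums

section HilbertTensor

variable {𝕜 E F K : Type*} [RCLike 𝕜]
  [NormedAddCommGroup E] [InnerProductSpace 𝕜 E]
  [NormedAddCommGroup F] [InnerProductSpace 𝕜 F]
  [NormedAddCommGroup K] [InnerProductSpace 𝕜 K]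
  {tmul : E →ₗ[𝕜] F →ₗ[𝕜] K}

theorem inner_sum_tmul_sum_tmul
    (hinner : ∀ x x' y y', inner 𝕜 (tmul x y) (tmul x' y') = inner 𝕜 x x' * inner 𝕜 y y')
    {ι ι' : Type*} [Fintype ι] [Fintype ι'] (a : ι → E) (b : ι → F) (a' : ι' → E) (b' : ι' → F) :
    inner 𝕜 (∑ i, tmul (a i) (b i)) (∑ j, tmul (a' j) (b' j)) =
      ∑ i, ∑ j, inner 𝕜 (a i) (a' j) * inner 𝕜 (b i) (b' j) := by
  simp_rw [sum_inner, inner_sum, hinner]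

theorem norm_tmul
    (hinner : ∀ x x' y y', inner 𝕜 (tmul x y) (tmul x' y') = inner 𝕜 x x' * inner 𝕜 y y')
    (x : E) (y : F) : ‖tmul x y‖ = ‖x‖ * ‖y‖ := by
  have h : ‖tmul x y‖ ^ 2 = (‖x‖ * ‖y‖) ^ 2 := by
    rw [← RCLike.ofReal_inj (K := 𝕜)]
    push_cast
    rw [← inner_self_eq_norm_sq_to_K, hinner, inner_self_eq_norm_sq_to_K,
      inner_self_eq_norm_sq_to_K, mul_pow]
  exact (pow_left_inj₀ (norm_nonneg _) (by positivity) two_ne_zero).mp h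

theorem norm_sq_sum_tmul_of_orthonormal
    (hinner : ∀ x x' y y', inner 𝕜 (tmul x y) (tmul x' y') = inner 𝕜 x x' * inner 𝕜 y y')
    {ι : Type*} [Fintype ι] {e : ι → F} (he : Orthonormal 𝕜 e) (v : ι → E) :
    ‖∑ i, tmul (v i) (e i)‖ ^ 2 = ∑ i, ‖v i‖ ^ 2 := by
  classical
  rw [orthonormal_iff_ite] at he
  rw [norm_sq_eq_re_inner (𝕜 := 𝕜), inner_sum_tmul_sum_tmul hinner]
  simp only [he, mul_ite, mul_one, mul_zero, Finset.sum_ite_eq, Finset.mem_univ, if_true,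
    map_sum, ← norm_sq_eq_re_inner]

theorem exists_orthonormal_sum_smul_eq {ι : Type*} [Finite ι] (w : ι → F) :
    ∃ (m : ℕ) (e : Fin m → F), Orthonormal 𝕜 e ∧
      ∃ c : ι → Fin m → 𝕜, ∀ i, w i = ∑ j, c i j • e j := by
  let W := Submodule.span 𝕜 (Set.range w)
  have : FiniteDimensional 𝕜 W := FiniteDimensional.span_of_finite 𝕜 (Set.finite_range w)
  let b := stdOrthonormalBasis 𝕜 W
  have hw : ∀ i, w i ∈ W := fun i => Submodule.subset_span (Set.mem_range_self i)
  refine ⟨_, fun j => b j, b.orthonormal.comp_linearIsometry W.subtypeₗᵢ,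
    fun i j => b.repr ⟨w i, hw i⟩ j, fun i => ?_⟩
  simpa using (congrArg Subtype.val (b.sum_repr ⟨w i, hw i⟩)).symm

theorem mul_norm_sum_tmul_le
    (hinner : ∀ x x' y y', inner 𝕜 (tmul x y) (tmul x' y') = inner 𝕜 x x' * inner 𝕜 y y')
    {G : Type*} [AddCommGroup G] [Module 𝕜 G] (f g : G →ₗ[𝕜] E) {c : ℝ} (hc : 0 ≤ c)
    (hfg : ∀ a, c * ‖g a‖ ≤ ‖f a‖) {ι : Type*} [Fintype ι] (x : ι → G) (w : ι → F) :
    c * ‖∑ i, tmul (g (x i)) (w i)‖ ≤ ‖∑ i, tmul (f (x i)) (w i)‖ := by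
  obtain ⟨m, e, he, coef, hw⟩ := exists_orthonormal_sum_smul_eq (𝕜 := 𝕜) w
  have regroup : ∀ h : G →ₗ[𝕜] E, ∑ i, tmul (h (x i)) (w i) =
      ∑ j, tmul (h (∑ i, coef i j • x i)) (e j) := by
    intro h
    simp_rw [hw, sum_tmul_sum_smul, map_sum, map_smul]
  rw [regroup f, regroup g, ← pow_le_pow_iff_left₀ (by positivity) (norm_nonneg _) two_ne_zero,
    mul_pow, norm_sq_sum_tmul_of_orthonormal hinner he, norm_sq_sum_tmul_of_orthonormal hinner he,
    Finset.mul_sum]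
  gcongr with j
  rw [← mul_pow]
  exact pow_le_pow_left₀ (by positivity) (hfg _) 2

end HilbertTensor

section ASeminorm

variable {V : Type*} [NormedAddCommGroup V] [InnerProductSpace ℂ V] {A T : V →L[ℂ] V}

theorem anorm_nonneg (A : V →L[ℂ] V) (x : V) : 0 ≤ anorm A x :=
  Real.sqrt_nonneg _

theorem anorm_smul (A : V →L[ℂ] V) (a : ℂ) (x : V) : anorm A (a • x) = ‖a‖ * anorm A x := by
  have h : inner ℂ (A (a • x)) (a • x) = ((‖a‖ ^ 2 : ℝ) : ℂ) * inner ℂ (A x) x := by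
    rw [map_smul, inner_smul_left, inner_smul_right, ← mul_assoc, Complex.conj_mul']
    push_cast; ring
  rw [anorm, anorm, h, Complex.re_ofReal_mul, Real.sqrt_mul (by positivity),
    Real.sqrt_sq (norm_nonneg a)]

theorem continuous_anorm (A : V →L[ℂ] V) : Continuous (anorm A) := by
  unfold anorm; fun_prop

theorem notMem_sigmaAapp_iff {lam : ℂ} :
    lam ∉ sigmaAapp A T ↔ ∃ c > 0, ∀ x, c * anorm A x ≤ anorm A (T x - lam • x) := by
  constructor
  · intro h
    by_contra! hsmall
    have hunit : ∀ n : ℕ, ∃ x, anorm A x = 1 ∧ anorm A (T x - lam • x) < 1 / (n + 1) := by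
      intro n
      obtain ⟨x, hx⟩ := hsmall (1 / (n + 1)) (by positivity)
      have hpos : 0 < anorm A x :=
        pos_of_mul_pos_right ((anorm_nonneg _ _).trans_lt hx) (by positivity)
      refine ⟨((anorm A x : ℂ))⁻¹ • x, ?_, ?_⟩
      · rw [anorm_smul, norm_inv, Complex.norm_real, Real.norm_of_nonneg hpos.le,
          inv_mul_cancel₀ hpos.ne']
      · rw [map_smul, smul_comm, ← smul_sub, anorm_smul, norm_inv, Complex.norm_real,
          Real.norm_of_nonneg hpos.le, inv_mul_lt_iff₀ hpos, mul_comm]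
        exact hx
    choose x hx1 hx2 using hunit
    exact h ⟨x, hx1, squeeze_zero (fun n => anorm_nonneg _ _) (fun n => (hx2 n).le)
      tendsto_one_div_add_atTop_nhds_zero_nat⟩
  · rintro ⟨c, hc, hb⟩ ⟨x, hx1, hx2⟩
    have : c ≤ 0 := ge_of_tendsto' hx2 fun n => by simpa [hx1 n] using hb (x n)
    linarith

end ASeminorm

section PositiveSqrt

variable {A : H →L[ℂ] H}

theorem inner_apply_eq_inner_sqrt (hA : A.IsPositive) (x y : H) :
    inner ℂ (A x) y = inner ℂ (CFC.sqrt A x) (CFC.sqrt A y) := by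
  have hAx : A x = CFC.sqrt A (CFC.sqrt A x) := by
    conv_lhs =>
      rw [← CFC.sqrt_mul_sqrt_self A ((ContinuousLinearMap.nonneg_iff_isPositive A).mpr hA)]
    rfl
  rw [hAx, ← ContinuousLinearMap.adjoint_inner_right,
    (IsSelfAdjoint.of_nonneg (CFC.sqrt_nonneg A)).adjoint_eq]

theorem anorm_eq_norm_sqrt (hA : A.IsPositive) (x : H) : anorm A x = ‖CFC.sqrt A x‖ := by
  rw [anorm, inner_apply_eq_inner_sqrt hA, norm_eq_sqrt_re_inner (𝕜 := ℂ)]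
  rfl

end PositiveSqrt

section TensorSeminorm

variable {K : Type*} [NormedAddCommGroup K] [InnerProductSpace ℂ K] {A T : H →L[ℂ] H}
  {tmul : H →ₗ[ℂ] H →ₗ[ℂ] K} {AA : K →L[ℂ] K}

theorem anorm_sum_tmul (hA : A.IsPositive)
    (hinner : ∀ x x' y y', inner ℂ (tmul x y) (tmul x' y') = inner ℂ x x' * inner ℂ y y')
    (hAA : ∀ x y, AA (tmul x y) = tmul (A x) (A y)) {ι : Type*} [Fintype ι] (x y : ι → H) :
    anorm AA (∑ i, tmul (x i) (y i)) = ‖∑ i, tmul (CFC.sqrt A (x i)) (CFC.sqrt A (y i))‖ := by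
  rw [anorm, map_sum, norm_eq_sqrt_re_inner (𝕜 := ℂ)]
  simp_rw [hAA, inner_sum_tmul_sum_tmul hinner, inner_apply_eq_inner_sqrt hA]
  rfl

theorem anorm_tmul (hA : A.IsPositive)
    (hinner : ∀ x x' y y', inner ℂ (tmul x y) (tmul x' y') = inner ℂ x x' * inner ℂ y y')
    (hAA : ∀ x y, AA (tmul x y) = tmul (A x) (A y)) (x y : H) :
    anorm AA (tmul x y) = anorm A x * anorm A y := by
  simpa [norm_tmul hinner, ← anorm_eq_norm_sqrt hA] using
    anorm_sum_tmul hA hinner hAA (fun _ : Unit => x) (fun _ => y)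

theorem sigmaAapp_subset_sigmaAapp_tmul (hA : A.IsPositive)
    (hinner : ∀ x x' y y', inner ℂ (tmul x y) (tmul x' y') = inner ℂ x x' * inner ℂ y y')
    {TI : K →L[ℂ] K} (hTI : ∀ x y, TI (tmul x y) = tmul (T x) y)
    (hAA : ∀ x y, AA (tmul x y) = tmul (A x) (A y)) :
    sigmaAapp A T ⊆ sigmaAapp AA TI := by
  rintro lam ⟨x, hx1, hx2⟩
  have hsub : ∀ n, TI (tmul (x n) (x 0)) - lam • tmul (x n) (x 0) =
      tmul (T (x n) - lam • x n) (x 0) := by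
    intro n
    rw [hTI, map_sub, map_smul, LinearMap.sub_apply, LinearMap.smul_apply]
  refine ⟨fun n => tmul (x n) (x 0), fun n => ?_, ?_⟩
  · rw [anorm_tmul hA hinner hAA, hx1, hx1, one_mul]
  · simpa only [hsub, anorm_tmul hA hinner hAA, hx1 0, mul_one] using hx2

theorem anorm_tmul_sub_lower_bound (hA : A.IsPositive)
    (hinner : ∀ x x' y y', inner ℂ (tmul x y) (tmul x' y') = inner ℂ x x' * inner ℂ y y')
    (hdense : (Submodule.span ℂ {z : K | ∃ x y, z = tmul x y}).topologicalClosure = ⊤)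
    {TI : K →L[ℂ] K} (hTI : ∀ x y, TI (tmul x y) = tmul (T x) y)
    (hAA : ∀ x y, AA (tmul x y) = tmul (A x) (A y)) {lam : ℂ} {c : ℝ} (hc : 0 ≤ c)
    (hb : ∀ x, c * anorm A x ≤ anorm A (T x - lam • x)) (z : K) :
    c * anorm AA z ≤ anorm AA (TI z - lam • z) := by
  have hclosed : IsClosed {z : K | c * anorm AA z ≤ anorm AA (TI z - lam • z)} :=
    isClosed_le (continuous_const.mul (continuous_anorm AA))
      ((continuous_anorm AA).comp (TI.continuous.sub (continuous_const_smul lam)))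
  have hspan : (Submodule.span ℂ {z : K | ∃ x y, z = tmul x y} : Set K) ⊆
      {z : K | c * anorm AA z ≤ anorm AA (TI z - lam • z)} := by
    intro z hz
    obtain ⟨n, x, y, rfl⟩ := exists_eq_sum_tmul_of_mem_span hz
    have hsub : TI (∑ i, tmul (x i) (y i)) - lam • ∑ i, tmul (x i) (y i) =
        ∑ i, tmul (T (x i) - lam • x i) (y i) := by
      simp only [map_sum, hTI, Finset.smul_sum, ← Finset.sum_sub_distrib, map_sub, map_smul,
        LinearMap.sub_apply, LinearMap.smul_apply]
    rw [Set.mem_ofPred_eq, hsub, anorm_sum_tmul hA hinner hAA, anorm_sum_tmul hA hinner hAA]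
    refine mul_norm_sum_tmul_le hinner (CFC.sqrt A ∘L (T - lam • 1) : H →L[ℂ] H)
      (CFC.sqrt A : H →L[ℂ] H) hc (fun a => ?_) x (fun i => CFC.sqrt A (y i))
    simpa [anorm_eq_norm_sqrt hA] using hb a
  have hz : z ∈ (Submodule.span ℂ {z : K | ∃ x y, z = tmul x y}).topologicalClosure := by
    rw [hdense]; trivial
  exact closure_minimal hspan hclosed hz

theorem sigmaAapp_tmul_eq (hA : A.IsPositive)
    (hinner : ∀ x x' y y', inner ℂ (tmul x y) (tmul x' y') = inner ℂ x x' * inner ℂ y y')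
    (hdense : (Submodule.span ℂ {z : K | ∃ x y, z = tmul x y}).topologicalClosure = ⊤)
    {TI : K →L[ℂ] K} (hTI : ∀ x y, TI (tmul x y) = tmul (T x) y)
    (hAA : ∀ x y, AA (tmul x y) = tmul (A x) (A y)) :
    sigmaAapp AA TI = sigmaAapp A T := by
  refine subset_antisymm (fun lam hlam => ?_) (sigmaAapp_subset_sigmaAapp_tmul hA hinner hTI hAA)
  by_contra hT
  obtain ⟨c, hc, hb⟩ := notMem_sigmaAapp_iff.mp hT
  exact notMem_sigmaAapp_iff.mpr
    ⟨c, hc, anorm_tmul_sub_lower_bound hA hinner hdense hTI hAA hc.le hb⟩ hlam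

end TensorSeminorm

variable {H₁ H₂ K : Type*} [NormedAddCommGroup H₁] [InnerProductSpace ℂ H₁] [CompleteSpace H₁]
  [NormedAddCommGroup H₂] [InnerProductSpace ℂ H₂] [CompleteSpace H₂]
  [NormedAddCommGroup K] [InnerProductSpace ℂ K] [CompleteSpace K]

/-- The Hilbert tensor product `K = H ⊗ H` is axiomatized by a bilinear map `tmul` with the
characteristic inner-product identity and dense span. -/
theorem stmt17_general (A T : H →L[ℂ] H) (hA : A.IsPositive)
    (tmul : H →ₗ[ℂ] H →ₗ[ℂ] K)
    (hinner : ∀ (x x' y y' : H),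
      (inner ℂ (tmul x y) (tmul x' y') : ℂ) = (inner ℂ x x' : ℂ) * (inner ℂ y y' : ℂ))
    (hdense : (Submodule.span ℂ {z : K | ∃ x y, z = tmul x y}).topologicalClosure = ⊤)
    (TI IT AA : K →L[ℂ] K)
    (hTI : ∀ x y : H, TI (tmul x y) = tmul (T x) y)
    (hIT : ∀ x y : H, IT (tmul x y) = tmul x (T y))
    (hAA : ∀ x y : H, AA (tmul x y) = tmul (A x) (A y)) :
    sigmaAapp AA TI = sigmaAapp A T ∧ sigmaAapp AA IT = sigmaAapp A T := by
  refine ⟨sigmaAapp_tmul_eq hA hinner hdense hTI hAA, ?_⟩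
  have hinner_flip : ∀ x x' y y' : H,
      inner ℂ (tmul.flip x y) (tmul.flip x' y') = inner ℂ x x' * inner ℂ y y' := by
    intro x x' y y'
    rw [LinearMap.flip_apply, LinearMap.flip_apply, hinner, mul_comm]
  have hspan_flip : {z : K | ∃ x y, z = tmul.flip x y} = {z : K | ∃ x y, z = tmul x y} := by
    ext z
    exact exists_comm
  exact sigmaAapp_tmul_eq hA hinner_flip (hspan_flip ▸ hdense) (fun x y => hIT y x)
    (fun x y => hAA y x)

/-- `σ_{A⊗A,app}(T ⊗ I) = σ_{A,app}(T)` and `σ_{A⊗A,app}(I ⊗ T) = σ_{A,app}(T)`,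
with the Hilbert tensor product `K = H ⊗ H` axiomatized by a bilinear map `tmul` with the
characteristic inner-product identity and dense span. -/
theorem stmt17 (A T : H →L[ℂ] H) (hA : A.IsPositive) (hA0 : A ≠ 0)
    (hT : MemBAhalf A T)
    (tmul : H →ₗ[ℂ] H →ₗ[ℂ] K)
    (hinner : ∀ (x x' y y' : H),
      (inner ℂ (tmul x y) (tmul x' y') : ℂ) = (inner ℂ x x' : ℂ) * (inner ℂ y y' : ℂ))
    (hdense : (Submodule.span ℂ {z : K | ∃ x y, z = tmul x y}).topologicalClosure = ⊤)
    (TI IT AA : K →L[ℂ] K) (hAApos : AA.IsPositive)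
    (hTI : ∀ x y : H, TI (tmul x y) = tmul (T x) y)
    (hIT : ∀ x y : H, IT (tmul x y) = tmul x (T y))
    (hAA : ∀ x y : H, AA (tmul x y) = tmul (A x) (A y)) :
    sigmaAapp AA TI = sigmaAapp A T ∧ sigmaAapp AA IT = sigmaAapp A T :=
  stmt17_general A T hA tmul hinner hdense TI IT AA hTI hIT hAA
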